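/- arXiv:1909.06724 — 2 statements merged into one kernel-verified Lean document; each statement's English description precedes it below -/
import Mathlib

section
/- Let f : R^p → R be convex and differentiable with M-Lipschitz continuous gradient (M > 0). Then for all x, y in R^p, (1/M)‖∇f(x) - ∇f(y)‖² ≤ ⟨∇f(x) - ∇f(y), x - y⟩. -/
open scoped RealInnerProductSpace

/-!
Write `d = ∇f(y) - ∇f(x)`. Convexity at `x` and the quadratic upper bound
`f(z) ≤ f(y) + ⟨∇f(y), z - y⟩ + (M/2)‖z - y‖²` coming from the Lipschitz gradient, evaluated
at the gradient step `z = y - d/M`, give `f(x) + ⟨∇f(x), y - x⟩ + ‖d‖²/(2M) ≤ f(y)`. Adding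
this to the same inequality with `x` and `y` swapped cancels the function values.
-/

variable {F : Type*} [NormedAddCommGroup F] [InnerProductSpace ℝ F] [CompleteSpace F]
  {f : F → ℝ} {g : F → F}

theorem HasGradientAt.hasDerivAt_add_smul {f' x v : F} {t : ℝ}
    (hf : HasGradientAt f f' (x + t • v)) :
    HasDerivAt (fun s : ℝ => f (x + s • v)) ⟪f', v⟫ t := by
  have hline : HasDerivAt (fun s : ℝ => x + s • v) v t := by
    simpa using ((hasDerivAt_id t).smul_const v).const_add x
  have := hf.hasFDerivAt.comp_hasDerivAt t hline
  simp only [InnerProductSpace.toDual_apply_apply] at this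
  exact this

theorem ConvexOn.add_inner_le_of_hasGradientAt {f' x : F} (hconv : ConvexOn ℝ Set.univ f)
    (hf : HasGradientAt f f' x) (y : F) :
    f x + ⟪f', y - x⟫ ≤ f y := by
  have hline : ConvexOn ℝ Set.univ (fun t : ℝ => f (x + t • (y - x))) := by
    simpa [Function.comp_def, AffineMap.lineMap_apply, add_comm] using
      hconv.comp_affineMap (AffineMap.lineMap x y : ℝ →ᵃ[ℝ] F)
  have hderiv : HasDerivAt (fun t : ℝ => f (x + t • (y - x))) ⟪f', y - x⟫ 0 :=
    HasGradientAt.hasDerivAt_add_smul (by simpa using hf)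
  have := hline.le_slope_of_hasDerivAt (Set.mem_univ 0) (Set.mem_univ 1) one_pos hderiv
  simp only [slope_def_field, one_smul, zero_smul, add_zero, add_sub_cancel, sub_zero,
    div_one] at this
  linarith

theorem le_add_inner_add_of_lipschitz_gradient {M : ℝ} {x : F}
    (hgrad : ∀ z, HasGradientAt f (g z) z) (hlip : ∀ z, ‖g z - g x‖ ≤ M * ‖z - x‖) (y : F) :
    f y ≤ f x + ⟪g x, y - x⟫ + M / 2 * ‖y - x‖ ^ 2 := by
  set v := y - x
  let φ : ℝ → ℝ := fun t => f (x + t • v) - t * ⟪g x, v⟫ - M / 2 * t ^ 2 * ‖v‖ ^ 2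
  have hφ : ∀ t, HasDerivAt φ (⟪g (x + t • v) - g x, v⟫ - M * t * ‖v‖ ^ 2) t := by
    intro t
    have := (((hgrad (x + t • v)).hasDerivAt_add_smul).sub
      ((hasDerivAt_id t).mul_const ⟪g x, v⟫)).sub
      (((hasDerivAt_pow 2 t).const_mul (M / 2)).mul_const (‖v‖ ^ 2))
    refine this.congr_deriv ?_
    rw [inner_sub_left]
    norm_num only [one_mul, id]
    ring
  have hφ_nonpos : ∀ t ∈ interior (Set.Icc (0 : ℝ) 1),
      ⟪g (x + t • v) - g x, v⟫ - M * t * ‖v‖ ^ 2 ≤ 0 := by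
    intro t ht
    rw [interior_Icc] at ht
    calc ⟪g (x + t • v) - g x, v⟫ - M * t * ‖v‖ ^ 2
        ≤ ‖g (x + t • v) - g x‖ * ‖v‖ - M * t * ‖v‖ ^ 2 := by
          gcongr; exact real_inner_le_norm _ _
      _ ≤ M * ‖t • v‖ * ‖v‖ - M * t * ‖v‖ ^ 2 := by
          gcongr; simpa using hlip (x + t • v)
      _ = 0 := by
          rw [norm_smul, Real.norm_of_nonneg ht.1.le]; ring
  have hanti : AntitoneOn φ (Set.Icc 0 1) :=
    antitoneOn_of_hasDerivWithinAt_nonpos (convex_Icc 0 1)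
      (fun t _ => (hφ t).continuousAt.continuousWithinAt)
      (fun t _ => (hφ t).hasDerivWithinAt) hφ_nonpos
  have := hanti (Set.left_mem_Icc.2 zero_le_one) (Set.right_mem_Icc.2 zero_le_one) zero_le_one
  simp only [φ, v, one_smul, zero_smul, add_zero, add_sub_cancel] at this
  linarith

theorem ConvexOn.add_inner_add_sq_norm_sub_gradient_le {M : ℝ} (hconv : ConvexOn ℝ Set.univ f)
    (hgrad : ∀ z, HasGradientAt f (g z) z) (hlip : ∀ z w, ‖g z - g w‖ ≤ M * ‖z - w‖) (x y : F) :
    f x + ⟪g x, y - x⟫ + (2 * M)⁻¹ * ‖g y - g x‖ ^ 2 ≤ f y := by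
  set d := g y - g x
  have hconvex := hconv.add_inner_le_of_hasGradientAt (hgrad x) (y - M⁻¹ • d)
  have hdescent := le_add_inner_add_of_lipschitz_gradient hgrad (fun w => hlip w y) (y - M⁻¹ • d)
  rw [sub_right_comm, inner_sub_right, real_inner_smul_right] at hconvex
  rw [sub_sub_cancel_left, inner_neg_right, real_inner_smul_right, norm_neg, norm_smul, mul_pow,
    Real.norm_eq_abs, sq_abs] at hdescent
  have hd : ⟪g y, d⟫ - ⟪g x, d⟫ = ‖d‖ ^ 2 := by
    rw [← inner_sub_left, real_inner_self_eq_norm_sq]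
  -- true also for `M = 0`, where `M⁻¹ = 0`
  have hM : M * M⁻¹ ^ 2 = M⁻¹ := by
    rcases eq_or_ne M 0 with rfl | hM
    · simp
    · field_simp
  linear_combination hconvex + hdescent - M⁻¹ * hd + ‖d‖ ^ 2 / 2 * hM

theorem stmt1_general (p : ℕ) (f : EuclideanSpace ℝ (Fin p) → ℝ)
    (g : EuclideanSpace ℝ (Fin p) → EuclideanSpace ℝ (Fin p))
    (M : ℝ)
    (hconv : ConvexOn ℝ Set.univ f)
    (hgrad : ∀ x, HasGradientAt f (g x) x)
    (hlip : ∀ x y, ‖g x - g y‖ ≤ M * ‖x - y‖) :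
    ∀ x y, (1 / M) * ‖g x - g y‖ ^ 2 ≤ ⟪g x - g y, x - y⟫ := by
  intro x y
  have hxy := hconv.add_inner_add_sq_norm_sub_gradient_le hgrad hlip x y
  have hyx := hconv.add_inner_add_sq_norm_sub_gradient_le hgrad hlip y x
  have hinner : ⟪g x, y - x⟫ + ⟪g y, x - y⟫ = -⟪g x - g y, x - y⟫ := by
    rw [inner_sub_left, ← neg_sub x y, inner_neg_right]
    ring
  rw [norm_sub_rev] at hxy
  linear_combination hxy + hyx - hinner

/-- Cocoercivity: if `f` is convex and differentiable with `M`-Lipschitz gradient `g`, then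
`(1/M)‖g x - g y‖² ≤ ⟨g x - g y, x - y⟩`. -/
theorem stmt1 (p : ℕ) (f : EuclideanSpace ℝ (Fin p) → ℝ)
    (g : EuclideanSpace ℝ (Fin p) → EuclideanSpace ℝ (Fin p))
    (M : ℝ) (hM : 0 < M)
    (hconv : ConvexOn ℝ Set.univ f)
    (hgrad : ∀ x, HasGradientAt f (g x) x)
    (hlip : ∀ x y, ‖g x - g y‖ ≤ M * ‖x - y‖) :
    ∀ x y, (1 / M) * ‖g x - g y‖ ^ 2 ≤ ⟪g x - g y, x - y⟫ :=
  stmt1_general p f g M hconv hgrad hlip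
end

section
/- Suppose the COLA updates x^{k+1} = x^k - (2cD + ρI)^{-1}(∇f(x^k) + c L_o x̂^k + G_o^T φ^k) and φ^{k+1} = φ^k + (c/2) G_o x̂^{k+1} hold, where D = (1/2)(L_o + L_u), L_o = (1/2)G_o^T G_o, L_u = (1/2)G_u^T G_u, E^k := x^k - x̂^k, and (x^*, φ^*) satisfies the KKT conditions ∇f(x^*) + G_o^T φ^* = 0 and G_o x^* = 0. Then ∇f(x^k) - ∇f(x^*) = (cL_u + ρI)(x^k - x^{k+1}) - G_o^T(φ^{k+1} - φ^*) + c L_o (E^k - E^{k+1}). -/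
open ContinuousLinearMap

/-- Lemma 2, first identity of COLA. With `L_o = (1/2)G_oᵀG_o`, `L_u = (1/2)G_uᵀG_u`,
`D = (1/2)(L_o + L_u)`, the primal update `(2cD + ρI)(x^k - x^{k+1}) = ∇f(x^k) + cL_o x̂^k + G_oᵀφ^k`,
the dual update `φ^{k+1} = φ^k + (c/2)G_o x̂^{k+1}`, censoring errors `E^k = x^k - x̂^k`, and KKT
conditions `∇f(x^*) + G_oᵀφ^* = 0`, `G_o x^* = 0`, one has
`∇f(x^k) - ∇f(x^*) = (cL_u + ρI)(x^k - x^{k+1}) - G_oᵀ(φ^{k+1} - φ^*) + cL_o(E^k - E^{k+1})`. -/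
theorem stmt13 (N M : ℕ) (c ρ : ℝ) (hc : 0 < c) (hρ : 0 < ρ)
    (Go Gu : EuclideanSpace ℝ (Fin N) →L[ℝ] EuclideanSpace ℝ (Fin M))
    (gradf : EuclideanSpace ℝ (Fin N) → EuclideanSpace ℝ (Fin N))
    (xk xk1 xhatk xhatk1 xstar : EuclideanSpace ℝ (Fin N))
    (φk φk1 φstar : EuclideanSpace ℝ (Fin M))
    (Lo Lu D : EuclideanSpace ℝ (Fin N) →L[ℝ] EuclideanSpace ℝ (Fin N))
    (hLo : Lo = (1 / 2 : ℝ) • (adjoint Go).comp Go)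
    (hLu : Lu = (1 / 2 : ℝ) • (adjoint Gu).comp Gu)
    (hD : D = (1 / 2 : ℝ) • (Lo + Lu))
    -- primal update: x^{k+1} = x^k - (2cD + ρI)⁻¹(∇f(x^k) + cL_o x̂^k + G_oᵀφ^k)
    (hprimal : ((2 * c) • D + ρ • ContinuousLinearMap.id ℝ (EuclideanSpace ℝ (Fin N)))
        (xk - xk1) = gradf xk + c • Lo xhatk + adjoint Go φk)
    -- dual update: φ^{k+1} = φ^k + (c/2)G_o x̂^{k+1}
    (hdual : φk1 = φk + (c / 2) • Go xhatk1)
    -- KKT conditions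
    (hkkt1 : gradf xstar + adjoint Go φstar = 0)
    (hkkt2 : Go xstar = 0) :
    gradf xk - gradf xstar =
      (c • Lu + ρ • ContinuousLinearMap.id ℝ (EuclideanSpace ℝ (Fin N))) (xk - xk1)
        - adjoint Go (φk1 - φstar) + c • Lo ((xk - xhatk) - (xk1 - xhatk1)) := by
  have hf : gradf xk = ((2 * c) • D + ρ • ContinuousLinearMap.id ℝ (EuclideanSpace ℝ (Fin N)))
      (xk - xk1) - c • Lo xhatk - adjoint Go φk := by
    rw [hprimal]; abel
  have hfs : gradf xstar = -(adjoint Go φstar) := by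
    have := hkkt1; linear_combination (norm := abel) this
  rw [hf, hfs, hdual, hD, hLo, hLu]
  simp only [ContinuousLinearMap.add_apply, ContinuousLinearMap.smul_apply,
    ContinuousLinearMap.comp_apply, ContinuousLinearMap.id_apply, map_sub, map_add, map_smul,
    smul_add, smul_sub]
  module
end
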